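/- arXiv:1905.01547 — 5 statements merged into one kernel-verified Lean document; each statement's English description precedes it below -/
import Mathlib

section
/- Let ζ be a primitive 5th root of unity and T = diag(ζ, ζ², ζ³, ζ⁴) acting on Sym^n(C^4). Then the trace of T⁻¹ on Sym^n(C^4) equals 1 if n ≡ 0 mod 5, equals -1 if n ≡ 1 mod 5, and equals 0 otherwise. -/
open Finset Complex

/-- The trace on `Sym^n(ℂ^4)` of a diagonal matrix with eigenvalues `d 0, d 1, d 2, d 3`:
the sum over all monomials of degree `n` in the basis vectors of the product of the
corresponding eigenvalues. -/
noncomputable def symTrace (d : Fin 4 → ℂ) (n : ℕ) : ℂ :=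
  ∑ x ∈ Finset.Nat.antidiagonalTuple 4 n, ∏ i, d i ^ x i

/-
The generating function `∑ₙ hₙ(d) tⁿ` of the traces on `Symⁿ` of `diag d` is `∏ᵢ (1 - dᵢ t)⁻¹`.
The eigenvalues of `T⁻¹` are `ω, ω², ω³, ω⁴` with `ω = ζ⁻¹`, and
`∏_{i=1}^{4} (1 - ωⁱ t) = 1 + t + t² + t³ + t⁴ = (1 - t⁵) / (1 - t)`, so the generating function
is `(1 - t) / (1 - t⁵)`: its coefficients are `5`-periodic, starting `1, -1, 0, 0, 0`.
-/

open PowerSeries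

-- Holds by unfolding: `antidiagonalTuple (k + 1)` is defined by this recursion on lists.
theorem Finset.Nat.sum_antidiagonalTuple_succ {M : Type*} [AddCommMonoid M] (k n : ℕ)
    (g : (Fin (k + 1) → ℕ) → M) :
    ∑ x ∈ Nat.antidiagonalTuple (k + 1) n, g x =
      ∑ p ∈ antidiagonal n, ∑ y ∈ Nat.antidiagonalTuple k p.2, g (Fin.cons p.1 y) := by
  simp only [Finset.sum, Nat.antidiagonalTuple, Multiset.Nat.antidiagonalTuple,
    List.Nat.antidiagonalTuple, List.flatMap, Multiset.map_coe, Multiset.sum_coe,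
    List.map_flatten, List.sum_flatten, List.map_map, Function.comp_def]
  rfl

section CompleteHomogeneous

variable {R : Type*} [CommSemiring R]

def completeHomogeneous {k : ℕ} (d : Fin k → R) (n : ℕ) : R :=
  ∑ x ∈ Finset.Nat.antidiagonalTuple k n, ∏ i, d i ^ x i

theorem completeHomogeneous_elim0 (d : Fin 0 → R) (n : ℕ) :
    completeHomogeneous d n = if n = 0 then 1 else 0 := by
  cases n <;> simp [completeHomogeneous, Finset.Nat.antidiagonalTuple_zero_zero]

theorem completeHomogeneous_cons {k : ℕ} (c : R) (d : Fin k → R) (n : ℕ) :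
    completeHomogeneous (Fin.cons c d : Fin (k + 1) → R) n =
      ∑ p ∈ antidiagonal n, c ^ p.1 * completeHomogeneous d p.2 := by
  simp only [completeHomogeneous, Finset.Nat.sum_antidiagonalTuple_succ, Fin.prod_univ_succ,
    Fin.cons_zero, Fin.cons_succ, mul_sum]

theorem completeHomogeneous_cons_succ {k : ℕ} (c : R) (d : Fin k → R) (n : ℕ) :
    completeHomogeneous (Fin.cons c d : Fin (k + 1) → R) (n + 1) =
      completeHomogeneous d (n + 1) +
        c * completeHomogeneous (Fin.cons c d : Fin (k + 1) → R) n := by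
  simp only [completeHomogeneous_cons, Finset.Nat.sum_antidiagonal_succ, pow_zero, one_mul,
    pow_succ', mul_sum, mul_assoc]

end CompleteHomogeneous

theorem mk_completeHomogeneous_cons_mul {R : Type*} [CommRing R] {k : ℕ} (c : R)
    (d : Fin k → R) :
    PowerSeries.mk (completeHomogeneous (Fin.cons c d : Fin (k + 1) → R)) * (1 - C c * X) =
      PowerSeries.mk (completeHomogeneous d) := by
  ext (_ | n)
  · simp [completeHomogeneous_cons]
  · rw [mul_sub, mul_one, ← mul_assoc, map_sub, coeff_succ_mul_X, mul_comm, coeff_C_mul,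
      coeff_mk, coeff_mk, coeff_mk, completeHomogeneous_cons_succ, add_sub_cancel_right]

theorem mk_completeHomogeneous_mul_prod {R : Type*} [CommRing R] {k : ℕ} (d : Fin k → R) :
    PowerSeries.mk (completeHomogeneous d) * ∏ i, (1 - C (d i) * X) = 1 := by
  induction k with
  | zero => ext n; simp [completeHomogeneous_elim0, coeff_one]
  | succ k ih =>
    have h := mk_completeHomogeneous_cons_mul (d 0) (Fin.tail d)
    rw [Fin.cons_self_tail] at h
    rw [Fin.prod_univ_succ, ← mul_assoc, h]
    exact ih (Fin.tail d)

theorem PowerSeries.coeff_add_mk_mul_one_sub_X_pow {R : Type*} [Ring R] (f : ℕ → R)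
    (m n : ℕ) : coeff (n + m) (PowerSeries.mk f * (1 - X ^ m)) = f (n + m) - f n := by
  rw [mul_sub, mul_one, map_sub, coeff_mk, coeff_mul_X_pow, coeff_mk]

theorem PowerSeries.coeff_mk_mul_one_sub_X_pow_of_lt {R : Type*} [Ring R] (f : ℕ → R)
    {m n : ℕ} (h : n < m) : coeff n (PowerSeries.mk f * (1 - X ^ m)) = f n := by
  rw [mul_sub, mul_one, map_sub, coeff_mk, coeff_mul_X_pow', if_neg h.not_ge, sub_zero]

theorem prod_one_sub_C_pow_mul_X_eq_sum_X_pow {R : Type*} [CommRing R] {ω : R}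
    (hω : ∑ i ∈ range 5, ω ^ i = 0) :
    ∏ i, (1 - C (![ω, ω ^ 2, ω ^ 3, ω ^ 4] i) * X : R⟦X⟧) = ∑ i ∈ range 5, X ^ i := by
  have hΦ : ∑ i ∈ range 5, C ω ^ i = (0 : R⟦X⟧) := by
    simpa only [map_sum, map_pow, map_zero] using congrArg C hω
  simp only [Fin.prod_univ_four, sum_range_succ, sum_range_zero] at hΦ ⊢
  simp only [Matrix.cons_val, map_pow]
  -- the cofactor is the quotient of the difference of the two sides by `1 + ω + ⋯ + ω⁴`
  linear_combination (-X - X ^ 2 - X ^ 3 - X ^ 4 + C ω * (X ^ 2 + X ^ 3 + X ^ 4)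
    + C ω ^ 3 * X ^ 2 - C ω ^ 5 * (X ^ 3 + X ^ 4) + C ω ^ 6 * X ^ 4) * hΦ

theorem symTrace_eq_completeHomogeneous (d : Fin 4 → ℂ) :
    symTrace d = completeHomogeneous d :=
  rfl

theorem mk_symTrace_mul_one_sub_X_pow_five {ω : ℂ} (hω : ∑ i ∈ range 5, ω ^ i = 0) :
    PowerSeries.mk (symTrace ![ω, ω ^ 2, ω ^ 3, ω ^ 4]) * (1 - X ^ 5) = 1 - X := by
  rw [← mul_neg_geom_sum, ← prod_one_sub_C_pow_mul_X_eq_sum_X_pow hω, mul_left_comm,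
    symTrace_eq_completeHomogeneous, mk_completeHomogeneous_mul_prod, mul_one]

/-- `ζ` a primitive 5th root of unity, `T = diag(ζ,ζ²,ζ³,ζ⁴)`: the trace of `T⁻¹`
on `Sym^n(ℂ^4)` is `1` if `n ≡ 0 mod 5`, `-1` if `n ≡ 1 mod 5`, and `0` otherwise. -/
theorem trace_inv_diag_zeta5 (ζ : ℂ) (hζ : IsPrimitiveRoot ζ 5) (n : ℕ) :
    symTrace ![ζ⁻¹, (ζ ^ 2)⁻¹, (ζ ^ 3)⁻¹, (ζ ^ 4)⁻¹] n =
      if n % 5 = 0 then 1 else if n % 5 = 1 then -1 else 0 := by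
  have hF := mk_symTrace_mul_one_sub_X_pow_five (hζ.inv.geom_sum_eq_zero (by norm_num))
  simp only [← inv_pow]
  set f := symTrace ![ζ⁻¹, ζ⁻¹ ^ 2, ζ⁻¹ ^ 3, ζ⁻¹ ^ 4]
  have hper : Function.Periodic f 5 := fun m => by
    rw [← sub_eq_zero, ← coeff_add_mk_mul_one_sub_X_pow, hF]
    simp [coeff_one, coeff_X]
  rw [← hper.map_mod_nat, ← coeff_mk_mul_one_sub_X_pow_of_lt f (n.mod_lt (by norm_num)), hF]
  simp only [map_sub, coeff_one, coeff_X]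
  split_ifs <;> simp_all
end

section
/- Let ζ be a primitive 12th root of unity and T = diag(ζ, ζ⁵, ζ⁷, ζ¹¹) acting on Sym^n(C^4). Then the trace of T⁻¹ on Sym^n(C^4) equals 1 if n ≡ 0 or 2 mod 12, equals -1 if n ≡ 6 or 8 mod 12, and equals 0 otherwise. -/
/-!
The generating function `∑ₙ tr(T⁻¹ | Symⁿ ℂ⁴) tⁿ` is `1 / det(1 - t T⁻¹)`. The eigenvalues of `T⁻¹`
are the four primitive 12th roots of unity, so `det(1 - t T⁻¹) = Φ₁₂(t) = 1 - t² + t⁴`, whose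
inverse `(1 + t²) / (1 + t⁶)` has the 12-periodic coefficients `1, 0, 1, 0, 0, 0, -1, 0, -1, 0, 0, 0`.
-/

open Finset Complex

open PowerSeries

theorem sum_antidiagonalTuple_prod_pow_eq_coeff {R : Type*} [CommSemiring R] {k : ℕ}
    (d : Fin k → R) (n : ℕ) :
    ∑ x ∈ Finset.Nat.antidiagonalTuple k n, ∏ i, d i ^ x i =
      coeff n (∏ i, PowerSeries.mk fun m ↦ d i ^ m) := by
  classical
  rw [coeff_prod]
  symm
  refine Finset.sum_equiv Finsupp.equivFunOnFinite (fun l ↦ ?_) (fun l _ ↦ ?_)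
  · simp [Finset.Nat.mem_antidiagonalTuple]
  · simp

theorem mk_pow_mul_one_sub_C_mul_X {R : Type*} [CommRing R] (a : R) :
    (PowerSeries.mk fun m ↦ a ^ m) * (1 - C a * X) = 1 := by
  simpa [rescale_mk, rescale_X] using congrArg (rescale a) (mk_one_mul_one_sub_eq_one R)

theorem mk_sum_antidiagonalTuple_prod_pow_mul_prod_one_sub_C_mul_X {R : Type*} [CommRing R]
    {k : ℕ} (d : Fin k → R) :
    PowerSeries.mk (fun n ↦ ∑ x ∈ Finset.Nat.antidiagonalTuple k n, ∏ i, d i ^ x i) *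
      ∏ i, (1 - C (d i) * X) = 1 := by
  have hmk : PowerSeries.mk (fun n ↦ ∑ x ∈ Finset.Nat.antidiagonalTuple k n, ∏ i, d i ^ x i) =
      ∏ i, PowerSeries.mk fun m ↦ d i ^ m := by
    ext n
    rw [coeff_mk, sum_antidiagonalTuple_prod_pow_eq_coeff]
  rw [hmk, ← Finset.prod_mul_distrib]
  exact Finset.prod_eq_one fun i _ ↦ mk_pow_mul_one_sub_C_mul_X (d i)

theorem IsPrimitiveRoot.pow_four_sub_pow_two_add_one_eq_zero {R : Type*} [CommRing R]
    [IsDomain R] {ζ : R} (hζ : IsPrimitiveRoot ζ 12) : ζ ^ 4 - ζ ^ 2 + 1 = 0 := by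
  have h6 : ζ ^ 6 = -1 :=
    (hζ.pow_of_dvd (by norm_num) (by norm_num : 6 ∣ 12)).eq_neg_one_of_two_right
  have h4 : ζ ^ 4 ≠ 1 := hζ.pow_ne_one_of_pos_of_lt (by norm_num) (by norm_num)
  have h : (ζ ^ 2 + 1) * (ζ ^ 4 - ζ ^ 2 + 1) = 0 := by linear_combination h6
  refine (mul_eq_zero.1 h).resolve_left fun h2 ↦ h4 ?_
  linear_combination (ζ ^ 2 - 1) * h2

theorem prod_one_sub_C_mul_X_of_pow_four_sub_pow_two_add_one_eq_zero {R : Type*} [CommRing R]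
    {ω : R} (hω : ω ^ 4 - ω ^ 2 + 1 = 0) :
    ∏ i, (1 - C (![ω, ω ^ 5, ω ^ 7, ω ^ 11] i) * X) = (1 - X ^ 2 + X ^ 4 : R⟦X⟧) := by
  set c : R⟦X⟧ := C ω
  have hc : c ^ 4 - c ^ 2 + 1 = 0 := by simpa [c, map_pow] using congrArg C hω
  simp only [Fin.prod_univ_four, Matrix.cons_val, map_pow]
  linear_combination (-(c + c ^ 3 + c ^ 5 + c ^ 7) * X
    + (1 + c ^ 2 + c ^ 8 + c ^ 10 + 2 * c ^ 12 + c ^ 14) * X ^ 2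
    - (c ^ 13 + c ^ 15 + c ^ 17 + c ^ 19) * X ^ 3
    + (-1 - c ^ 2 + c ^ 6 + c ^ 8 - c ^ 12 - c ^ 14 + c ^ 18 + c ^ 20) * X ^ 4) * hc

def invCyclotomicTwelveCoeff {R : Type*} [Ring R] (n : ℕ) : R :=
  if n % 12 = 0 ∨ n % 12 = 2 then 1
  else if n % 12 = 6 ∨ n % 12 = 8 then -1
  else 0

theorem invCyclotomicTwelveCoeff_add_four {R : Type*} [Ring R] (n : ℕ) :
    (invCyclotomicTwelveCoeff (n + 4) : R) =
      invCyclotomicTwelveCoeff (n + 2) - invCyclotomicTwelveCoeff n := by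
  have hr : n % 12 < 12 := Nat.mod_lt _ (by norm_num)
  simp only [invCyclotomicTwelveCoeff, Nat.add_mod n 4, Nat.add_mod n 2]
  generalize n % 12 = r at hr ⊢
  interval_cases r <;> simp

theorem one_sub_X_sq_add_X_pow_four_mul_mk_invCyclotomicTwelveCoeff {R : Type*} [Ring R] :
    (1 - X ^ 2 + X ^ 4 : R⟦X⟧) * PowerSeries.mk invCyclotomicTwelveCoeff = 1 := by
  ext n
  simp only [add_mul, sub_mul, one_mul, map_add, map_sub, coeff_X_pow_mul', coeff_mk, coeff_one]
  match n with
  | 0 | 1 | 2 | 3 => simp [invCyclotomicTwelveCoeff]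
  | n + 4 => simp [invCyclotomicTwelveCoeff_add_four]

/-- `ζ` a primitive 12th root of unity, `T = diag(ζ,ζ⁵,ζ⁷,ζ¹¹)`: the trace of `T⁻¹`
on `Sym^n(ℂ^4)` is `1` if `n ≡ 0, 2 mod 12`, `-1` if `n ≡ 6, 8 mod 12`, else `0`. -/
theorem trace_inv_diag_zeta12 (ζ : ℂ) (hζ : IsPrimitiveRoot ζ 12) (n : ℕ) :
    symTrace ![ζ⁻¹, (ζ ^ 5)⁻¹, (ζ ^ 7)⁻¹, (ζ ^ 11)⁻¹] n =
      if n % 12 = 0 ∨ n % 12 = 2 then 1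
      else if n % 12 = 6 ∨ n % 12 = 8 then -1
      else 0 := by
  have hd : ![ζ⁻¹, (ζ ^ 5)⁻¹, (ζ ^ 7)⁻¹, (ζ ^ 11)⁻¹] = ![ζ⁻¹, ζ⁻¹ ^ 5, ζ⁻¹ ^ 7, ζ⁻¹ ^ 11] := by
    simp only [inv_pow]
  have hgen := mk_sum_antidiagonalTuple_prod_pow_mul_prod_one_sub_C_mul_X
    ![ζ⁻¹, ζ⁻¹ ^ 5, ζ⁻¹ ^ 7, ζ⁻¹ ^ 11]
  rw [prod_one_sub_C_mul_X_of_pow_four_sub_pow_two_add_one_eq_zero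
    hζ.inv.pow_four_sub_pow_two_add_one_eq_zero] at hgen
  have hcoeff := congrArg (coeff n)
    (left_inv_eq_right_inv hgen one_sub_X_sq_add_X_pow_four_mul_mk_invCyclotomicTwelveCoeff)
  rw [coeff_mk, coeff_mk] at hcoeff
  rw [hd, symTrace, hcoeff, invCyclotomicTwelveCoeff]
end

section
/- Let ζ = e^{2πi/6} and T = diag(ζ⁵, ζ⁴, ζ², ζ) acting on Sym^n(C^4). Then the trace of T⁻¹ on Sym^n(C^4) equals 1 if n ≡ 0 mod 6, equals -1 if n ≡ 2 mod 6, and equals 0 otherwise. -/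
/-!
The traces `symTrace d n` are the coefficients of `∏ i, 1 / (1 - d i X)`. For the eigenvalues
`ζ, ζ², ζ⁴, ζ⁵` of `T⁻¹` the denominator is `Φ₆(X) Φ₃(X) = 1 + X² + X⁴`, whose inverse
`(1 - X²) / (1 - X⁶)` has the stated periodic coefficients.
-/

open Finset Complex

namespace PowerSeries

variable {R : Type*}

theorem mk_pow_mul_one_sub_C_mul_X [CommRing R] (a : R) :
    mk (a ^ ·) * (1 - C a * X) = 1 := by
  simpa [rescale_mk, rescale_X] using congrArg (rescale a) (mk_one_mul_one_sub_eq_one R)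

theorem prod_mk_pow_eq_of_mul_eq_one [CommRing R] {ι : Type*} [Fintype ι] (d : ι → R)
    {f : R⟦X⟧} (hf : (∏ i, (1 - C (d i) * X)) * f = 1) :
    ∏ i, mk (d i ^ ·) = f := by
  refine left_inv_eq_right_inv ?_ hf
  rw [← prod_mul_distrib]
  exact Fintype.prod_eq_one _ fun i => mk_pow_mul_one_sub_C_mul_X (d i)

theorem one_add_X_sq_add_X_pow_four_mul_mk [Ring R] :
    (1 + X ^ 2 + X ^ 4 : R⟦X⟧) *
        mk (fun n => if n % 6 = 0 then 1 else if n % 6 = 2 then -1 else 0) = 1 := by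
  ext n
  simp only [add_mul, one_mul, map_add, coeff_X_pow_mul', coeff_mk, coeff_one]
  match n with
  | 0 | 1 | 2 | 3 => norm_num
  | m + 4 =>
    simp only [show m + 4 - 2 = m + 2 by omega, show m + 4 - 4 = m by omega]
    have : m % 6 < 6 := Nat.mod_lt m (by norm_num)
    interval_cases h : m % 6 <;> simp [Nat.add_mod, h]

end PowerSeries

open PowerSeries

theorem symTrace_eq_coeff_prod (d : Fin 4 → ℂ) (n : ℕ) :
    symTrace d n = coeff n (∏ i, mk (d i ^ ·)) := by
  rw [coeff_prod, symTrace]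
  refine sum_equiv Finsupp.equivFunOnFinite.symm (fun x => ?_) (fun x _ => by simp)
  simp [Finset.Nat.mem_antidiagonalTuple, Finset.mem_finsuppAntidiag]

theorem IsPrimitiveRoot.prod_one_sub_C_mul_X_eq_one_add_X_sq_add_X_pow_four {K : Type*}
    [CommRing K] [IsDomain K] {ζ : K} (hζ : IsPrimitiveRoot ζ 6) :
    (1 - C ζ * X) * (1 - C (ζ ^ 2) * X) * (1 - C (ζ ^ 4) * X) * (1 - C (ζ ^ 5) * X) =
      (1 + X ^ 2 + X ^ 4 : K⟦X⟧) := by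
  have hΦ : ζ ^ 2 - ζ + 1 = 0 := by simpa using hζ.isRoot_cyclotomic (by norm_num)
  have h15 : ζ + ζ ^ 5 = 1 := by linear_combination (ζ ^ 3 + ζ ^ 2 - 1) * hΦ
  have h24 : ζ ^ 2 + ζ ^ 4 = -1 := by linear_combination (ζ ^ 2 + ζ + 1) * hΦ
  have e15 : C ζ + C ζ ^ 5 = (1 : K⟦X⟧) := by rw [← map_pow, ← map_add, h15, map_one]
  have e24 : C ζ ^ 2 + C ζ ^ 4 = (-1 : K⟦X⟧) := by
    rw [← map_pow, ← map_pow, ← map_add, h24, map_neg, map_one]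
  have e6 : C ζ ^ 6 = (1 : K⟦X⟧) := by rw [← map_pow, hζ.pow_eq_one, map_one]
  simp only [map_pow]
  have hΦ₆ : (1 - C ζ * X) * (1 - C ζ ^ 5 * X) = 1 - X + X ^ 2 := by
    linear_combination (-X) * e15 + X ^ 2 * e6
  have hΦ₃ : (1 - C ζ ^ 2 * X) * (1 - C ζ ^ 4 * X) = 1 + X + X ^ 2 := by
    linear_combination (-X) * e24 + X ^ 2 * e6
  linear_combination (1 - C ζ ^ 2 * X) * (1 - C ζ ^ 4 * X) * hΦ₆ + (1 - X + X ^ 2) * hΦ₃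

theorem inv_pow_eq_pow_of_add_eq {G : Type*} [DivisionMonoid G] {ζ : G} {i j k : ℕ}
    (hζ : ζ ^ k = 1) (h : i + j = k) : (ζ ^ i)⁻¹ = ζ ^ j :=
  inv_eq_of_mul_eq_one_right (by rw [← pow_add, h, hζ])

/-- `ζ = e^{2πi/6}`, `T = diag(ζ⁵,ζ⁴,ζ²,ζ)`: the trace of `T⁻¹` on `Sym^n(ℂ^4)`
is `1` if `n ≡ 0 mod 6`, `-1` if `n ≡ 2 mod 6`, and `0` otherwise. -/
theorem trace_inv_diag_zeta6 (n : ℕ) :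
    symTrace ![((Complex.exp (2 * Real.pi * Complex.I / 6)) ^ 5)⁻¹,
               ((Complex.exp (2 * Real.pi * Complex.I / 6)) ^ 4)⁻¹,
               ((Complex.exp (2 * Real.pi * Complex.I / 6)) ^ 2)⁻¹,
               (Complex.exp (2 * Real.pi * Complex.I / 6))⁻¹] n =
      if n % 6 = 0 then 1 else if n % 6 = 2 then -1 else 0 := by
  set ζ := Complex.exp (2 * Real.pi * Complex.I / 6)
  have hζ : IsPrimitiveRoot ζ 6 := by simpa using Complex.isPrimitiveRoot_exp 6 (by norm_num)
  have hinv (i j : ℕ) (h : i + j = 6) : (ζ ^ i)⁻¹ = ζ ^ j :=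
    inv_pow_eq_pow_of_add_eq hζ.pow_eq_one h
  rw [hinv 5 1 rfl, hinv 4 2 rfl, hinv 2 4 rfl, pow_one,
    show ζ⁻¹ = ζ ^ 5 by simpa using hinv 1 5 rfl, symTrace_eq_coeff_prod]
  have hden : ∏ i, (1 - C ((![ζ, ζ ^ 2, ζ ^ 4, ζ ^ 5] : Fin 4 → ℂ) i) * X) =
      1 + X ^ 2 + X ^ 4 := by
    simpa [Fin.prod_univ_four] using hζ.prod_one_sub_C_mul_X_eq_one_add_X_sq_add_X_pow_four
  rw [prod_mk_pow_eq_of_mul_eq_one _ (by rw [hden]; exact one_add_X_sq_add_X_pow_four_mul_mk),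
    coeff_mk]
end

section
/- The special unitary group SU_{(1,1)}(Z[i]) = {g ∈ SL_2(Z[i]) : g* I_{1,-1} g = I_{1,-1}} is isomorphic to the subgroup of SL_2(Z) consisting of matrices (m_1 m_2; m_3 m_4) with m_1 ≡ m_4 mod 2 and m_2 ≡ m_3 mod 2, which has index 3 in SL_2(Z). An explicit isomorphism sends the matrix with rows (a+bi, c+di) and (c−di, a−bi) to the matrix with rows (a+c, d−b) and (d+b, a−c). -/
/-!
Both groups are the norm-one units of the split quaternion order `ℍ[ℤ,-1,1]`
(`i² = -1`, `j² = 1`, `k = ij`), whose reduced norm is `a² + b² - c² - d²`.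
Sending `i ↦ diag(i, -i)`, `j ↦ (0 1; 1 0)` embeds it into `M₂(ℂ)`, taking `a+bi+cj+dk` to
`((a+bi, c+di), (c-di, a-bi))`, and `i ↦ (0 -1; 1 0)`, `j ↦ diag(1, -1)` embeds it into `M₂(ℤ)`,
taking it to `((a+c, d-b), (d+b, a-c))`; in both, the determinant is the reduced norm.
The first image of the unit group is `SU_{(1,1)}(ℤ[i])`, since `g* J g = J` and `det g = 1`
force `adj g = g⁻¹ = J g* J` for `J = diag(1, -1)`. The second is the theta group of matrices
congruent mod 2 to `1` or to `(0 1; 1 0)`, the preimage of an order-2 subgroup of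
`SL₂(𝔽₂) ≅ S₃` under the surjective reduction, hence of index `6 / 2 = 3`.
-/

open Matrix

/-- Membership in `SU_{(1,1)}(ℤ[i])`: a 2×2 complex matrix with Gaussian integer
entries, determinant 1, satisfying `g* I_{1,-1} g = I_{1,-1}`. -/
def SU11Gauss (g : Matrix (Fin 2) (Fin 2) ℂ) : Prop :=
  (∀ i j, ∃ a b : ℤ, g i j = a + b * Complex.I) ∧ g.det = 1 ∧
    g.conjTranspose * !![(1 : ℂ), 0; 0, -1] * g = !![(1 : ℂ), 0; 0, -1]

open Quaternion Complex
open scoped MatrixGroups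

theorem QuaternionAlgebra.mem_unitary_iff_re_star_mul_self {R : Type*} [CommRing R]
    {c₁ c₂ c₃ : R} {q : ℍ[R,c₁,c₂,c₃]} : q ∈ unitary ℍ[R,c₁,c₂,c₃] ↔ (star q * q).re = 1 := by
  rw [Unitary.mem_iff, ← star_comm_self', and_self, QuaternionAlgebra.star_mul_eq_coe]
  exact QuaternionAlgebra.coe_inj

theorem Matrix.fin_two_eq_star_of_conjTranspose_mul_mul_eq {R : Type*} [CommRing R] [StarRing R]
    {g : Matrix (Fin 2) (Fin 2) R} (hdet : g.det = 1)
    (h : gᴴ * !![1, 0; 0, -1] * g = !![1, 0; 0, -1]) :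
    g 1 1 = star (g 0 0) ∧ g 0 1 = star (g 1 0) := by
  set J : Matrix (Fin 2) (Fin 2) R := !![1, 0; 0, -1]
  have hJ : J * J = 1 := by simp [J, one_fin_two]
  have hleft : J * gᴴ * J * g = 1 := by simp only [Matrix.mul_assoc] at h ⊢; rw [h, hJ]
  have hright : g * g.adjugate = 1 := by rw [mul_adjugate, hdet, one_smul]
  have := left_inv_eq_right_inv hleft hright
  rw [adjugate_fin_two] at this
  constructor
  · simpa [J, Matrix.mul_apply, vecMul, dotProduct] using (congr_fun₂ this 0 0).symm
  · simpa [J, Matrix.mul_apply, vecMul, dotProduct] using (congr_fun₂ this 0 1).symm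

def gaussianBasis : QuaternionAlgebra.Basis (Matrix (Fin 2) (Fin 2) ℂ) (-1 : ℤ) 0 1 where
  i := !![I, 0; 0, -I]
  j := !![0, 1; 1, 0]
  k := !![0, I; -I, 0]
  i_mul_i := by ext i j; fin_cases i <;> fin_cases j <;> simp
  j_mul_j := by ext i j; fin_cases i <;> fin_cases j <;> simp
  i_mul_j := by ext i j; fin_cases i <;> fin_cases j <;> simp
  j_mul_i := by ext i j; fin_cases i <;> fin_cases j <;> simp

def integerBasis : QuaternionAlgebra.Basis (Matrix (Fin 2) (Fin 2) ℤ) (-1 : ℤ) 0 1 where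
  i := !![0, -1; 1, 0]
  j := !![1, 0; 0, -1]
  k := !![0, 1; 1, 0]
  i_mul_i := by decide
  j_mul_j := by decide
  i_mul_j := by decide
  j_mul_i := by decide

noncomputable def toGaussianMatrix : ℍ[ℤ,-1,1] →ₐ[ℤ] Matrix (Fin 2) (Fin 2) ℂ :=
  gaussianBasis.liftHom

def toIntegerMatrix : ℍ[ℤ,-1,1] →ₐ[ℤ] Matrix (Fin 2) (Fin 2) ℤ := integerBasis.liftHom

theorem toGaussianMatrix_mk (a b c d : ℤ) :
    toGaussianMatrix ⟨a, b, c, d⟩ = !![(a : ℂ) + b * I, (c : ℂ) + d * I;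
                                       (c : ℂ) - d * I, (a : ℂ) - b * I] := by
  ext i j; fin_cases i <;> fin_cases j <;>
    simp [toGaussianMatrix, gaussianBasis, QuaternionAlgebra.Basis.lift, Matrix.intCast_apply] <;>
    ring

theorem toIntegerMatrix_mk (a b c d : ℤ) :
    toIntegerMatrix ⟨a, b, c, d⟩ = !![a + c, d - b; d + b, a - c] := by
  ext i j; fin_cases i <;> fin_cases j <;>
    simp [toIntegerMatrix, integerBasis, QuaternionAlgebra.Basis.lift, Matrix.intCast_apply] <;>
    ring

theorem det_toGaussianMatrix (q : ℍ[ℤ,-1,1]) :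
    (toGaussianMatrix q).det = ((star q * q).re : ℂ) := by
  obtain ⟨a, b, c, d⟩ := q
  rw [toGaussianMatrix_mk, det_fin_two_of, QuaternionAlgebra.star_mk, QuaternionAlgebra.mk_mul_mk]
  push_cast
  linear_combination ((d : ℂ) ^ 2 - b ^ 2) * I_sq

theorem det_toIntegerMatrix (q : ℍ[ℤ,-1,1]) : (toIntegerMatrix q).det = (star q * q).re := by
  obtain ⟨a, b, c, d⟩ := q
  rw [toIntegerMatrix_mk, det_fin_two_of, QuaternionAlgebra.star_mk, QuaternionAlgebra.mk_mul_mk]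
  ring

theorem toGaussianMatrix_injective : Function.Injective toGaussianMatrix := by
  refine (injective_iff_map_eq_zero _).2 fun ⟨a, b, c, d⟩ h => ?_
  rw [toGaussianMatrix_mk] at h
  obtain ⟨rfl, rfl⟩ : a = 0 ∧ b = 0 := by simpa [Complex.ext_iff] using congr_fun₂ h 0 0
  obtain ⟨rfl, rfl⟩ : c = 0 ∧ d = 0 := by simpa [Complex.ext_iff] using congr_fun₂ h 0 1
  rfl

theorem toIntegerMatrix_injective : Function.Injective toIntegerMatrix := by
  refine (injective_iff_map_eq_zero _).2 fun ⟨a, b, c, d⟩ h => ?_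
  rw [toIntegerMatrix_mk] at h
  have h00 : a + c = 0 := congr_fun₂ h 0 0
  have h01 : d - b = 0 := congr_fun₂ h 0 1
  have h10 : d + b = 0 := congr_fun₂ h 1 0
  have h11 : a - c = 0 := congr_fun₂ h 1 1
  obtain ⟨rfl, rfl, rfl, rfl⟩ : a = 0 ∧ b = 0 ∧ c = 0 ∧ d = 0 := by omega
  rfl

theorem conjTranspose_toGaussianMatrix (q : ℍ[ℤ,-1,1]) :
    (toGaussianMatrix q)ᴴ = !![1, 0; 0, -1] * toGaussianMatrix (star q) * !![1, 0; 0, -1] := by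
  obtain ⟨a, b, c, d⟩ := q
  ext i j; fin_cases i <;> fin_cases j <;>
    simp [toGaussianMatrix_mk, QuaternionAlgebra.star_mk] <;> ring

theorem Matrix.SpecialLinearGroup.map_intCastRingHom_zmod_two_surjective :
    Function.Surjective
      (Matrix.SpecialLinearGroup.map (n := Fin 2) (Int.castRingHom (ZMod 2))) := by
  intro y
  -- Lift the entries to `{0, 1}`: the determinant `d` of the lift is then `±1`, and scaling the
  -- second column by `d` makes it `d² = 1` without changing the reduction.
  set m : Matrix (Fin 2) (Fin 2) ℤ := fun i j => (y i j).val
  have hm : ∀ i j, (m i j : ZMod 2) = y i j := by simp [m, ZMod.intCast_cast]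
  have hy : y 0 0 * y 1 1 - y 0 1 * y 1 0 = 1 := by rw [← det_fin_two]; exact y.det_coe
  have hdet : m.det ^ 2 = 1 := by
    have hval : ∀ a b c d : ZMod 2, a * d - b * c = 1 →
        ((a.val : ℤ) * d.val - b.val * c.val) ^ 2 = 1 := by decide
    rw [det_fin_two]
    exact hval _ _ _ _ hy
  have hdet_cast : (m.det : ZMod 2) = 1 := by rw [det_fin_two]; push_cast; rw [hm, hm, hm, hm, hy]
  refine ⟨⟨m * !![1, 0; 0, m.det], by rw [det_mul, det_fin_two_of]; simpa [sq] using hdet⟩, ?_⟩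
  apply Subtype.ext
  change (Int.castRingHom (ZMod 2)).mapMatrix (m * !![1, 0; 0, m.det]) = y
  ext i j
  fin_cases i <;> fin_cases j <;> simp [Matrix.mul_apply, hm, hdet_cast]

theorem Matrix.mul_swap_eq_swap_mul_iff {R : Type*} [CommRing R] (m : Matrix (Fin 2) (Fin 2) R) :
    m * !![0, 1; 1, 0] = !![0, 1; 1, 0] * m ↔ m 0 0 = m 1 1 ∧ m 0 1 = m 1 0 := by
  rw [eta_fin_two m, mul_fin_two, mul_fin_two]
  simp [and_comm, eq_comm]

def swapModTwo : SL(2, ZMod 2) := ⟨!![0, 1; 1, 0], by decide⟩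

def thetaGroup : Subgroup SL(2, ℤ) :=
  (Subgroup.centralizer {swapModTwo}).comap
    (Matrix.SpecialLinearGroup.map (Int.castRingHom (ZMod 2)))

theorem mem_thetaGroup_iff (g : SL(2, ℤ)) : g ∈ thetaGroup ↔
    (g : Matrix (Fin 2) (Fin 2) ℤ) 0 0 % 2 = (g : Matrix (Fin 2) (Fin 2) ℤ) 1 1 % 2 ∧
      (g : Matrix (Fin 2) (Fin 2) ℤ) 0 1 % 2 = (g : Matrix (Fin 2) (Fin 2) ℤ) 1 0 % 2 := by
  rw [thetaGroup, Subgroup.mem_comap, Subgroup.mem_centralizer_singleton_iff]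
  refine Subtype.ext_iff.trans <|
    (Matrix.mul_swap_eq_swap_mul_iff ((Int.castRingHom (ZMod 2)).mapMatrix g)).trans ?_
  exact and_congr (ZMod.intCast_eq_intCast_iff' _ _ 2) (ZMod.intCast_eq_intCast_iff' _ _ 2)

instance : DecidablePred (· ∈ Subgroup.centralizer {swapModTwo}) := fun _ =>
  decidable_of_iff _ Subgroup.mem_centralizer_singleton_iff.symm

theorem index_thetaGroup : thetaGroup.index = 3 := by
  rw [thetaGroup, Subgroup.index_comap_of_surjective _
    Matrix.SpecialLinearGroup.map_intCastRingHom_zmod_two_surjective]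
  have h := (Subgroup.centralizer {swapModTwo}).index_mul_card
  have h6 : Nat.card SL(2, ZMod 2) = 6 := by rw [Nat.card_eq_fintype_card]; decide
  have h2 : Nat.card (Subgroup.centralizer {swapModTwo}) = 2 := by
    rw [Nat.card_eq_fintype_card]; decide
  rw [h6, h2] at h
  omega

def unitaryToSL : unitary ℍ[ℤ,-1,1] →* SL(2, ℤ) where
  toFun q := ⟨toIntegerMatrix (q : ℍ[ℤ,-1,1]), by
    rw [det_toIntegerMatrix, ← QuaternionAlgebra.mem_unitary_iff_re_star_mul_self]; exact q.2⟩
  map_one' := Subtype.ext (map_one toIntegerMatrix)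
  map_mul' p q := Subtype.ext (map_mul toIntegerMatrix (p : ℍ[ℤ,-1,1]) q)

theorem unitaryToSL_injective : Function.Injective unitaryToSL := fun _ _ h =>
  Subtype.ext (toIntegerMatrix_injective (congrArg Subtype.val h))

theorem mem_range_toIntegerMatrix_iff (m : Matrix (Fin 2) (Fin 2) ℤ) :
    m ∈ Set.range toIntegerMatrix ↔ m 0 0 % 2 = m 1 1 % 2 ∧ m 0 1 % 2 = m 1 0 % 2 := by
  constructor
  · rintro ⟨⟨a, b, c, d⟩, rfl⟩
    rw [toIntegerMatrix_mk]
    show (a + c) % 2 = (a - c) % 2 ∧ (d - b) % 2 = (d + b) % 2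
    omega
  · rintro ⟨h0, h1⟩
    obtain ⟨a, c, h00, h11⟩ : ∃ a c, m 0 0 = a + c ∧ m 1 1 = a - c :=
      ⟨(m 0 0 + m 1 1) / 2, (m 0 0 - m 1 1) / 2, by omega, by omega⟩
    obtain ⟨b, d, h01, h10⟩ : ∃ b d, m 0 1 = d - b ∧ m 1 0 = d + b :=
      ⟨(m 1 0 - m 0 1) / 2, (m 0 1 + m 1 0) / 2, by omega, by omega⟩
    exact ⟨⟨a, b, c, d⟩, by rw [toIntegerMatrix_mk, eta_fin_two m, h00, h01, h10, h11]⟩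

theorem range_unitaryToSL : unitaryToSL.range = thetaGroup := by
  ext g
  rw [MonoidHom.mem_range, mem_thetaGroup_iff, ← mem_range_toIntegerMatrix_iff]
  constructor
  · rintro ⟨q, rfl⟩
    exact ⟨q, rfl⟩
  · rintro ⟨q, hq⟩
    have hdet : (star q * q).re = 1 := by rw [← det_toIntegerMatrix, hq, g.det_coe]
    exact ⟨⟨q, QuaternionAlgebra.mem_unitary_iff_re_star_mul_self.2 hdet⟩, Subtype.ext hq⟩

noncomputable def unitaryEquivThetaGroup : unitary ℍ[ℤ,-1,1] ≃* thetaGroup :=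
  (MonoidHom.ofInjective unitaryToSL_injective).trans (MulEquiv.subgroupCongr range_unitaryToSL)

theorem su11Gauss_toGaussianMatrix {q : ℍ[ℤ,-1,1]} (hq : q ∈ unitary ℍ[ℤ,-1,1]) :
    SU11Gauss (toGaussianMatrix q) := by
  refine ⟨fun i j => ?_, ?_, ?_⟩
  · obtain ⟨a, b, c, d⟩ := q
    rw [toGaussianMatrix_mk]
    fin_cases i <;> fin_cases j
    exacts [⟨a, b, rfl⟩, ⟨c, d, rfl⟩, ⟨c, -d, show (c : ℂ) - d * I = _ by push_cast; ring⟩,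
      ⟨a, -b, show (a : ℂ) - b * I = _ by push_cast; ring⟩]
  · rw [det_toGaussianMatrix, QuaternionAlgebra.mem_unitary_iff_re_star_mul_self.1 hq,
      Int.cast_one]
  · have hJ : !![(1 : ℂ), 0; 0, -1] * !![1, 0; 0, -1] = 1 := by simp [one_fin_two]
    rw [conjTranspose_toGaussianMatrix]
    simp only [Matrix.mul_assoc]
    rw [← Matrix.mul_assoc _ _ (toGaussianMatrix q), hJ, Matrix.one_mul, ← map_mul,
      Unitary.star_mul_self_of_mem hq, map_one, Matrix.mul_one]

theorem SU11Gauss.exists_toGaussianMatrix_eq {g : Matrix (Fin 2) (Fin 2) ℂ} (hg : SU11Gauss g) :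
    ∃ q ∈ unitary ℍ[ℤ,-1,1], toGaussianMatrix q = g := by
  obtain ⟨hent, hdet, hJ⟩ := hg
  obtain ⟨a, b, h00⟩ := hent 0 0
  obtain ⟨c, d, h10⟩ := hent 1 0
  obtain ⟨h11, h01⟩ := Matrix.fin_two_eq_star_of_conjTranspose_mul_mul_eq hdet hJ
  have hq : toGaussianMatrix ⟨a, b, c, -d⟩ = g := by
    rw [eta_fin_two g, h11, h01, h00, h10, toGaussianMatrix_mk]
    simp [Complex.ext_iff]
  refine ⟨_, ?_, hq⟩
  rw [QuaternionAlgebra.mem_unitary_iff_re_star_mul_self, ← Int.cast_inj (α := ℂ),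
    ← det_toGaussianMatrix, hq, hdet, Int.cast_one]

noncomputable def unitaryEquivSU11Gauss : unitary ℍ[ℤ,-1,1] ≃ {g // SU11Gauss g} :=
  Equiv.ofBijective (fun q => ⟨toGaussianMatrix q, su11Gauss_toGaussianMatrix q.2⟩)
    ⟨fun _ _ h => Subtype.ext (toGaussianMatrix_injective (congrArg Subtype.val h)),
      fun g =>
        let ⟨q, hq, h⟩ := g.2.exists_toGaussianMatrix_eq
        ⟨⟨q, hq⟩, Subtype.ext h⟩⟩

/-- `SU_{(1,1)}(ℤ[i])` is isomorphic to the subgroup of `SL_2(ℤ)` of matrices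
`(m₁ m₂; m₃ m₄)` with `m₁ ≡ m₄ mod 2` and `m₂ ≡ m₃ mod 2`, which has index 3 in
`SL_2(ℤ)`; an explicit isomorphism sends `((a+bi, c+di), (c−di, a−bi))` to
`((a+c, d−b), (d+b, a−c))`. -/
theorem su11_gauss_iso_index_three :
    ∃ B : Subgroup (Matrix.SpecialLinearGroup (Fin 2) ℤ),
      (∀ g : Matrix.SpecialLinearGroup (Fin 2) ℤ,
        g ∈ B ↔ ((g : Matrix (Fin 2) (Fin 2) ℤ) 0 0) % 2 =
                  ((g : Matrix (Fin 2) (Fin 2) ℤ) 1 1) % 2 ∧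
                ((g : Matrix (Fin 2) (Fin 2) ℤ) 0 1) % 2 =
                  ((g : Matrix (Fin 2) (Fin 2) ℤ) 1 0) % 2) ∧
      B.index = 3 ∧
      ∃ f : {g : Matrix (Fin 2) (Fin 2) ℂ // SU11Gauss g} → B,
        Function.Bijective f ∧
        (∀ x y : {g : Matrix (Fin 2) (Fin 2) ℂ // SU11Gauss g},
          ∃ hxy : SU11Gauss (x.1 * y.1), f ⟨x.1 * y.1, hxy⟩ = f x * f y) ∧
        (∀ (x : {g : Matrix (Fin 2) (Fin 2) ℂ // SU11Gauss g}) (a b c d : ℤ),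
          x.1 = !![(a : ℂ) + b * Complex.I, (c : ℂ) + d * Complex.I;
                   (c : ℂ) - d * Complex.I, (a : ℂ) - b * Complex.I] →
          ((f x : Matrix.SpecialLinearGroup (Fin 2) ℤ) : Matrix (Fin 2) (Fin 2) ℤ) =
            !![a + c, d - b; d + b, a - c]) := by
  set e := unitaryEquivSU11Gauss
  refine ⟨thetaGroup, mem_thetaGroup_iff, index_thetaGroup,
    fun x => unitaryEquivThetaGroup (e.symm x),
    unitaryEquivThetaGroup.bijective.comp e.symm.bijective, fun x y => ?_, fun x a b c d hx => ?_⟩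
  · obtain ⟨p, rfl⟩ := e.surjective x
    obtain ⟨q, rfl⟩ := e.surjective y
    have hmul : (e p).1 * (e q).1 = (e (p * q)).1 := (map_mul toGaussianMatrix _ _).symm
    refine ⟨hmul ▸ (e (p * q)).2, ?_⟩
    dsimp only
    rw [show (⟨_, _⟩ : {g // SU11Gauss g}) = e (p * q) from Subtype.ext hmul,
      e.symm_apply_apply, e.symm_apply_apply, e.symm_apply_apply, map_mul]
  · have hq : toGaussianMatrix (e.symm x) = toGaussianMatrix ⟨a, b, c, d⟩ := by
      rw [toGaussianMatrix_mk a b c d, ← hx]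
      exact congrArg Subtype.val (e.apply_symm_apply x)
    change toIntegerMatrix (e.symm x) = _
    rw [toGaussianMatrix_injective hq, toIntegerMatrix_mk]
end

section
/- Let S be the 4×4 integer matrix with rows (0,1,0,0), (0,0,-1,0), (0,0,-1,1), (1,1,-1,0). Then S lies in Sp_4(Z), S⁵ = id_4, and the centralizer of S in Sp_4(Z) is exactly {±S^k : 0 ≤ k ≤ 4}, a group of order 10. -/
open Matrix

/-- The symplectic form `J`. -/
def Jmat : Matrix (Fin 4) (Fin 4) ℤ :=
  !![0, 0, 1, 0; 0, 0, 0, 1; -1, 0, 0, 0; 0, -1, 0, 0]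

/-- The torsion element `S` of `Sp₄(ℤ)` of order 5. -/
def Smat : Matrix (Fin 4) (Fin 4) ℤ :=
  !![0, 1, 0, 0; 0, 0, -1, 0; 0, 0, -1, 1; 1, 1, -1, 0]

lemma eta_fin_four' (A : Matrix (Fin 4) (Fin 4) ℤ) :
    A = !![A 0 0, A 0 1, A 0 2, A 0 3;
           A 1 0, A 1 1, A 1 2, A 1 3;
           A 2 0, A 2 1, A 2 2, A 2 3;
           A 3 0, A 3 1, A 3 2, A 3 3] := by
  ext i j
  fin_cases i <;> fin_cases j <;> rfl

lemma comm_struct (g : Matrix (Fin 4) (Fin 4) ℤ) (h : g * Smat = Smat * g) :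
    g = !![g 0 0, g 0 1, g 0 2, g 0 3;
           g 0 3, g 0 0 + g 0 3, -g 0 1 - g 0 2 - g 0 3, g 0 2;
           -g 0 2, -g 0 2 - g 0 3, g 0 0 - g 0 1, g 0 1 + g 0 2 + g 0 3;
           g 0 1 + g 0 3, g 0 1 - g 0 2, -g 0 1, g 0 0 + g 0 2 + g 0 3] := by
  have e : ∀ i j : Fin 4, (g * Smat) i j = (Smat * g) i j := fun i j => by rw [h]
  have h1 := e 0 0; have h2 := e 0 1; have h3 := e 0 2; have h4 := e 0 3
  have h5 := e 1 0; have h6 := e 1 1; have h7 := e 1 2; have h8 := e 1 3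
  have h9 := e 2 0; have h10 := e 2 1; have h11 := e 2 2; have h12 := e 2 3
  have h13 := e 3 0; have h14 := e 3 1; have h15 := e 3 2; have h16 := e 3 3
  simp [Smat, mul_apply, Fin.sum_univ_four] at h1 h2 h3 h4 h5 h6 h7 h8 h9 h10 h11 h12 h13 h14 h15 h16
  have e10 : g 1 0 = g 0 3 := by omega
  have e11 : g 1 1 = g 0 0 + g 0 3 := by omega
  have e12 : g 1 2 = -g 0 1 - g 0 2 - g 0 3 := by omega
  have e13 : g 1 3 = g 0 2 := by omega
  have e20 : g 2 0 = -g 0 2 := by omega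
  have e21 : g 2 1 = -g 0 2 - g 0 3 := by omega
  have e22 : g 2 2 = g 0 0 - g 0 1 := by omega
  have e23 : g 2 3 = g 0 1 + g 0 2 + g 0 3 := by omega
  have e30 : g 3 0 = g 0 1 + g 0 3 := by omega
  have e31 : g 3 1 = g 0 1 - g 0 2 := by omega
  have e32 : g 3 2 = -g 0 1 := by omega
  have e33 : g 3 3 = g 0 0 + g 0 2 + g 0 3 := by omega
  conv_lhs => rw [eta_fin_four' g, e10, e11, e12, e13, e20, e21, e22, e23, e30, e31, e32, e33]

lemma trans4 (a b c d : ℤ) :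
    (!![a, b, c, d;
        d, a + d, -b - c - d, c;
        -c, -c - d, a - b, b + c + d;
        b + d, b - c, -b, a + c + d] : Matrix (Fin 4) (Fin 4) ℤ).transpose =
    !![a, d, -c, b + d;
       b, a + d, -c - d, b - c;
       c, -b - c - d, a - b, -b;
       d, c, b + c + d, a + c + d] := by
  ext i j
  fin_cases i <;> fin_cases j <;> rfl

lemma abs_le_two (x : ℤ) (h : x * x ≤ 4) : -2 ≤ x ∧ x ≤ 2 := by
  constructor <;> nlinarith

set_option maxHeartbeats 2000000 in
lemma key10 (a b c d : ℤ)
    (E1 : c*d + c*b + c*c + d*b + d*d - b*a + b*b + a*a = 1)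
    (E2 : 2*(c*d) + c*a + c*c + d*b + 2*(d*a) + 2*(d*d) + b*b + a*a = 1) :
    (a = 1 ∧ b = 0 ∧ c = 0 ∧ d = 0) ∨ (a = 0 ∧ b = 1 ∧ c = 0 ∧ d = 0) ∨
    (a = 0 ∧ b = 0 ∧ c = -1 ∧ d = 0) ∨ (a = 0 ∧ b = 0 ∧ c = 1 ∧ d = -1) ∨
    (a = -1 ∧ b = -1 ∧ c = 0 ∧ d = 1) ∨ (a = -1 ∧ b = 0 ∧ c = 0 ∧ d = 0) ∨
    (a = 0 ∧ b = -1 ∧ c = 0 ∧ d = 0) ∨ (a = 0 ∧ b = 0 ∧ c = 1 ∧ d = 0) ∨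
    (a = 0 ∧ b = 0 ∧ c = -1 ∧ d = 1) ∨ (a = 1 ∧ b = 1 ∧ c = 0 ∧ d = -1) := by
  have key : a*a + b*b + (c+d)*(c+d) + d*d + (a-b)*(a-b) + (a+c+d)*(a+c+d)
      + (a+d)*(a+d) + (b+c+d)*(b+c+d) + (b+d)*(b+d) + c*c = 4 := by
    linear_combination 2*E1 + 2*E2
  have sq : (0:ℤ) ≤ b*b ∧ (0:ℤ) ≤ (c+d)*(c+d) ∧ (0:ℤ) ≤ d*d ∧ (0:ℤ) ≤ (a-b)*(a-b) ∧
      (0:ℤ) ≤ (a+c+d)*(a+c+d) ∧ (0:ℤ) ≤ (a+d)*(a+d) ∧ (0:ℤ) ≤ (b+c+d)*(b+c+d) ∧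
      (0:ℤ) ≤ (b+d)*(b+d) ∧ (0:ℤ) ≤ c*c ∧ (0:ℤ) ≤ a*a :=
    ⟨mul_self_nonneg _, mul_self_nonneg _, mul_self_nonneg _, mul_self_nonneg _,
     mul_self_nonneg _, mul_self_nonneg _, mul_self_nonneg _, mul_self_nonneg _,
     mul_self_nonneg _, mul_self_nonneg _⟩
  obtain ⟨s1,s2,s3,s4,s5,s6,s7,s8,s9,s10⟩ := sq
  have haq : a*a ≤ 4 := by linarith
  have hbq : b*b ≤ 4 := by linarith
  have hcq : c*c ≤ 4 := by linarith
  have hdq : d*d ≤ 4 := by linarith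
  obtain ⟨ha1, ha2⟩ := abs_le_two a haq
  obtain ⟨hb1, hb2⟩ := abs_le_two b hbq
  obtain ⟨hc1, hc2⟩ := abs_le_two c hcq
  obtain ⟨hd1, hd2⟩ := abs_le_two d hdq
  clear key s1 s2 s3 s4 s5 s6 s7 s8 s9 s10 haq hbq hcq hdq
  interval_cases a <;> interval_cases b <;> interval_cases c <;> interval_cases d <;> omega

/-- `S ∈ Sp₄(ℤ)`, `S⁵ = 1`, and the centralizer of `S` in `Sp₄(ℤ)` is exactly
`{±S^k : 0 ≤ k ≤ 4}`, a group of order 10. -/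
theorem centralizer_of_S :
    Smat.transpose * Jmat * Smat = Jmat ∧
    Smat ^ 5 = 1 ∧
    {g : Matrix (Fin 4) (Fin 4) ℤ |
        g.transpose * Jmat * g = Jmat ∧ g * Smat = Smat * g} =
      {g | ∃ k ≤ 4, g = Smat ^ k ∨ g = -(Smat ^ k)} ∧
    Set.ncard {g : Matrix (Fin 4) (Fin 4) ℤ |
        g.transpose * Jmat * g = Jmat ∧ g * Smat = Smat * g} = 10 := by
  have hset : {g : Matrix (Fin 4) (Fin 4) ℤ |
      g.transpose * Jmat * g = Jmat ∧ g * Smat = Smat * g} =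
      {g | ∃ k ≤ 4, g = Smat ^ k ∨ g = -(Smat ^ k)} := by
    ext g
    simp only [Set.mem_setOf_eq]
    constructor
    · rintro ⟨hJ, hC⟩
      have hg := comm_struct g hC
      obtain ⟨a, b, c, d, ha, hb, hc, hd⟩ :
          ∃ a b c d : ℤ, g 0 0 = a ∧ g 0 1 = b ∧ g 0 2 = c ∧ g 0 3 = d :=
        ⟨_, _, _, _, rfl, rfl, rfl, rfl⟩
      rw [ha, hb, hc, hd] at hg
      rw [hg, trans4] at hJ
      have E1 := congrFun (congrFun hJ 0) 2
      have E2 := congrFun (congrFun hJ 1) 3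
      simp [Jmat, mul_apply, Fin.sum_univ_four] at E1 E2
      rcases key10 a b c d (by linear_combination E1) (by linear_combination E2) with
        ⟨rfl, rfl, rfl, rfl⟩ | ⟨rfl, rfl, rfl, rfl⟩ | ⟨rfl, rfl, rfl, rfl⟩ |
        ⟨rfl, rfl, rfl, rfl⟩ | ⟨rfl, rfl, rfl, rfl⟩ | ⟨rfl, rfl, rfl, rfl⟩ |
        ⟨rfl, rfl, rfl, rfl⟩ | ⟨rfl, rfl, rfl, rfl⟩ | ⟨rfl, rfl, rfl, rfl⟩ |
        ⟨rfl, rfl, rfl, rfl⟩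
      · exact ⟨0, by norm_num, Or.inl (by rw [hg]; decide)⟩
      · exact ⟨1, by norm_num, Or.inl (by rw [hg]; decide)⟩
      · exact ⟨2, by norm_num, Or.inl (by rw [hg]; decide)⟩
      · exact ⟨3, by norm_num, Or.inl (by rw [hg]; decide)⟩
      · exact ⟨4, by norm_num, Or.inl (by rw [hg]; decide)⟩
      · exact ⟨0, by norm_num, Or.inr (by rw [hg]; decide)⟩
      · exact ⟨1, by norm_num, Or.inr (by rw [hg]; decide)⟩
      · exact ⟨2, by norm_num, Or.inr (by rw [hg]; decide)⟩
      · exact ⟨3, by norm_num, Or.inr (by rw [hg]; decide)⟩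
      · exact ⟨4, by norm_num, Or.inr (by rw [hg]; decide)⟩
    · rintro ⟨k, hk, h⟩
      interval_cases k <;> rcases h with rfl | rfl <;> exact ⟨by decide, by decide⟩
  refine ⟨by decide, by decide, hset, ?_⟩
  rw [hset]
  have hF : {g : Matrix (Fin 4) (Fin 4) ℤ | ∃ k ≤ 4, g = Smat ^ k ∨ g = -(Smat ^ k)} =
      (↑({Smat ^ 0, Smat ^ 1, Smat ^ 2, Smat ^ 3, Smat ^ 4, -Smat ^ 0, -Smat ^ 1,
          -Smat ^ 2, -Smat ^ 3, -Smat ^ 4} : Finset (Matrix (Fin 4) (Fin 4) ℤ)) :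
        Set (Matrix (Fin 4) (Fin 4) ℤ)) := by
    ext g
    simp only [Set.mem_setOf_eq, Finset.coe_insert, Set.mem_insert_iff, Finset.coe_singleton,
      Set.mem_singleton_iff]
    constructor
    · rintro ⟨k, hk, h⟩
      interval_cases k <;> rcases h with rfl | rfl <;> simp
    · rintro (rfl | rfl | rfl | rfl | rfl | rfl | rfl | rfl | rfl | rfl)
      exacts [⟨0, by norm_num, Or.inl rfl⟩, ⟨1, by norm_num, Or.inl rfl⟩,
        ⟨2, by norm_num, Or.inl rfl⟩, ⟨3, by norm_num, Or.inl rfl⟩,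
        ⟨4, by norm_num, Or.inl rfl⟩, ⟨0, by norm_num, Or.inr rfl⟩,
        ⟨1, by norm_num, Or.inr rfl⟩, ⟨2, by norm_num, Or.inr rfl⟩,
        ⟨3, by norm_num, Or.inr rfl⟩, ⟨4, by norm_num, Or.inr rfl⟩]
  rw [hF, Set.ncard_coe_finset]
  decide
end
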